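/- Let k \geq 3, n - k \geq 1, and G = L(S(CS_{k,n-k})). Then the first Zagreb coindex of G is \overline{M_1}(G) = n^3 + (3-k)n^2 - (k^2 - 12k + 18)n + k^3 - 7k^2 + 6k. -/

import Mathlib

open scoped Classical
open Finset

noncomputable section

namespace Zagreb

variable {V : Type*}

/-- First Zagreb index. -/
def M1 (G : SimpleGraph V) [Fintype V] : ℕ :=
  ∑ v, (G.degree v) ^ 2

/-- Second Zagreb index. -/
def M2 (G : SimpleGraph V) [Fintype V] : ℕ :=
  ∑ e ∈ G.edgeFinset,
    Sym2.lift ⟨fun u v => G.degree u * G.degree v, fun _ _ => mul_comm _ _⟩ e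

/-- First Zagreb coindex: sum over unordered pairs of distinct non-adjacent vertices. -/
def M1bar (G : SimpleGraph V) [Fintype V] : ℕ :=
  ∑ e ∈ Gᶜ.edgeFinset,
    Sym2.lift ⟨fun u v => G.degree u + G.degree v, fun _ _ => add_comm _ _⟩ e

/-- Second Zagreb coindex. -/
def M2bar (G : SimpleGraph V) [Fintype V] : ℕ :=
  ∑ e ∈ Gᶜ.edgeFinset,
    Sym2.lift ⟨fun u v => G.degree u * G.degree v, fun _ _ => mul_comm _ _⟩ e

/-- The cycle-star graph: a cycle of length `k` together with `l` leaves
attached to the cycle vertex `0`. -/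
def cycleStar (k l : ℕ) : SimpleGraph (Fin k ⊕ Fin l) where
  Adj x y :=
    match x, y with
    | Sum.inl i, Sum.inl j => i ≠ j ∧ ((i.val + 1) % k = j.val ∨ (j.val + 1) % k = i.val)
    | Sum.inl i, Sum.inr _ => i.val = 0
    | Sum.inr _, Sum.inl i => i.val = 0
    | Sum.inr _, Sum.inr _ => False
  symm := by
    constructor
    rintro (i | a) (j | b) h
    · exact ⟨Ne.symm h.1, h.2.symm⟩
    · exact h
    · exact h
    · exact h
  loopless := by
    constructor
    rintro (i | a) h
    · exact h.1 rfl
    · exact h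

/-- The subdivision graph: each edge is replaced by a path of length 2. -/
def subdivision (G : SimpleGraph V) : SimpleGraph (V ⊕ G.edgeSet) where
  Adj x y :=
    match x, y with
    | Sum.inl v, Sum.inr e => v ∈ (e : Sym2 V)
    | Sum.inr e, Sum.inl v => v ∈ (e : Sym2 V)
    | _, _ => False
  symm := by constructor; rintro (v | e) (w | f) h <;> simp_all
  loopless := by constructor; rintro (v | e) h <;> simp_all

/-- The line graph of `G`. -/
def lineGraph (G : SimpleGraph V) : SimpleGraph G.edgeSet where
  Adj e f := e ≠ f ∧ ∃ v, v ∈ (e : Sym2 V) ∧ v ∈ (f : Sym2 V)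
  symm := by
    constructor
    rintro e f ⟨hne, v, hv1, hv2⟩
    exact ⟨hne.symm, v, hv2, hv1⟩
  loopless := by constructor; rintro e ⟨hne, _⟩; exact hne rfl

/-- A cut-vertex: a vertex of a connected graph whose removal disconnects it. -/
def IsCutVertex (G : SimpleGraph V) (v : V) : Prop :=
  G.Connected ∧ ¬ (G.induce {u | u ≠ v}).Connected

/-- The line cut-vertex graph of `G`: vertices are the edges and cut-vertices of `G`;
two vertices are adjacent iff the corresponding edges share an endpoint, or one is
an edge incident to the other, a cut-vertex. -/
def lineCutGraph (G : SimpleGraph V) :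
    SimpleGraph (G.edgeSet ⊕ {v : V // IsCutVertex G v}) where
  Adj x y :=
    match x, y with
    | Sum.inl e, Sum.inl f => e ≠ f ∧ ∃ v, v ∈ (e : Sym2 V) ∧ v ∈ (f : Sym2 V)
    | Sum.inl e, Sum.inr c => (c : V) ∈ (e : Sym2 V)
    | Sum.inr c, Sum.inl e => (c : V) ∈ (e : Sym2 V)
    | Sum.inr _, Sum.inr _ => False
  symm := by
    constructor
    rintro (e | c) (f | d) h
    · exact ⟨Ne.symm h.1, h.2.choose, h.2.choose_spec.2, h.2.choose_spec.1⟩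
    · exact h
    · exact h
    · exact h
  loopless := by
    constructor
    rintro (e | c) h
    · exact h.1 rfl
    · exact h

end Zagreb

/-!
Every edge of the subdivision `S(G)` joins a vertex `v` of `G` to an edge of `G` at `v`, so the
vertices of `L(S(G))` are the darts of `G`, and the vertex coming from a dart at `v` has degree
`deg v + 2 - 2 = deg v`. Hence every degree sum over `L(S(G))` is a weighted degree sum over `G`.
For any graph on `N` vertices, `M1bar = ∑ (N - 1 - deg x) deg x`, so only `N`, `∑ deg` and
`∑ deg²` of `L(S(G))` are needed, i.e. `∑ deg^j` over `G` for `j = 1, 2, 3`. In `CS_{k,n-k}` one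
vertex has degree `n - k + 2`, `k - 1` vertices have degree `2` and `n - k` have degree `1`.
-/

namespace Zagreb

open SimpleGraph

section DegreeSums

variable {V M : Type*} [Fintype V] [AddCommMonoid M] (G : SimpleGraph V) [DecidableRel G.Adj]

theorem sum_dart_fst (f : V → M) : ∑ d : G.Dart, f d.fst = ∑ v, G.degree v • f v := by
  rw [← sum_fiberwise univ (fun d : G.Dart => d.fst)]
  refine sum_congr rfl fun v _ => ?_
  rw [sum_congr rfl fun d hd => by rw [(mem_filter.1 hd).2], sum_const]
  congr 1
  convert G.dart_fst_fiber_card_eq_degree v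

theorem sum_edgeFinset_lift_add (f : V → M) :
    ∑ e ∈ G.edgeFinset, Sym2.lift ⟨fun u v => f u + f v, fun _ _ => add_comm _ _⟩ e =
      ∑ v, G.degree v • f v := by
  rw [← sum_dart_fst, ← sum_fiberwise_of_maps_to (g := Dart.edge) (t := G.edgeFinset)
    fun d _ => mem_edgeFinset.2 d.edge_mem]
  refine sum_congr rfl fun e he => ?_
  induction e using Sym2.ind with
  | _ u v =>
    let d : G.Dart := ⟨(u, v), mem_edgeFinset.1 he⟩
    rw [show s(u, v) = d.edge from rfl, Dart.edge_fiber, sum_pair d.symm_ne.symm]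
    rfl

end DegreeSums

theorem M1bar_eq_card_sub_one_mul_sum_degree {W : Type*} [Fintype W] (H : SimpleGraph W) :
    (M1bar H : ℤ) =
      (Fintype.card W - 1) * ∑ x, (H.degree x : ℤ) - ∑ x, (H.degree x : ℤ) ^ 2 := by
  rw [M1bar, sum_edgeFinset_lift_add, mul_sum, ← sum_sub_distrib]
  push_cast
  refine sum_congr rfl fun x _ => ?_
  have hlt := H.degree_lt_card_verts x
  rw [degree_compl, smul_eq_mul, Nat.cast_mul,
    Nat.cast_sub (by omega : H.degree x ≤ Fintype.card W - 1),
    Nat.cast_sub (by omega : 1 ≤ Fintype.card W)]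
  ring

theorem degree_eq_card_inl_add_card_inr {α β : Type*} [Fintype α] [Fintype β]
    (H : SimpleGraph (α ⊕ β)) (x : α ⊕ β) :
    H.degree x = #{a | H.Adj x (.inl a)} + #{b | H.Adj x (.inr b)} := by
  rw [← card_neighborFinset_eq_degree, neighborFinset_eq_filter, card_filter, card_filter,
    card_filter, Fintype.sum_sum_type]

section LineGraph

variable {V : Type*} [Fintype V] (G : SimpleGraph V)

theorem map_neighborFinset_lineGraph {u v : V} (h : G.Adj u v) :
    ((lineGraph G).neighborFinset ⟨s(u, v), h⟩).map (Function.Embedding.subtype _) =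
      (G.incidenceFinset u ∪ G.incidenceFinset v).erase s(u, v) := by
  ext e
  simp only [mem_map, mem_neighborFinset, Function.Embedding.coe_subtype, mem_erase, mem_union,
    mem_incidenceFinset, incidenceSet, Set.mem_ofPred_eq]
  constructor
  · rintro ⟨f, ⟨hne, w, hw, hwf⟩, rfl⟩
    refine ⟨fun hf => hne (Subtype.ext hf.symm), ?_⟩
    rcases Sym2.mem_iff.1 hw with rfl | rfl
    exacts [Or.inl ⟨f.2, hwf⟩, Or.inr ⟨f.2, hwf⟩]
  · have hne {he : e ∈ G.edgeSet} (hes : e ≠ s(u, v)) :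
        ⟨s(u, v), h⟩ ≠ (⟨e, he⟩ : G.edgeSet) := fun hf => hes (congrArg Subtype.val hf).symm
    rintro ⟨hes, ⟨he, hu⟩ | ⟨he, hv⟩⟩
    · exact ⟨⟨e, he⟩, ⟨hne hes, u, Sym2.mem_mk_left _ _, hu⟩, rfl⟩
    · exact ⟨⟨e, he⟩, ⟨hne hes, v, Sym2.mem_mk_right _ _, hv⟩, rfl⟩

theorem lineGraph_degree_add_two {u v : V} (h : G.Adj u v) :
    (lineGraph G).degree ⟨s(u, v), h⟩ + 2 = G.degree u + G.degree v := by
  have hinter : G.incidenceFinset u ∩ G.incidenceFinset v = {s(u, v)} := by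
    rw [← coe_inj, coe_inter, coe_incidenceFinset, coe_incidenceFinset, coe_singleton,
      G.incidenceSet_inter_incidenceSet_of_adj h]
  have hmem : s(u, v) ∈ G.incidenceFinset u ∪ G.incidenceFinset v :=
    mem_union_left _ ((G.mem_incidenceFinset _ _).2 (G.mk'_mem_incidenceSet_left_iff.2 h))
  have hunion := card_union_add_card_inter (G.incidenceFinset u) (G.incidenceFinset v)
  rw [hinter, card_singleton, ← card_erase_add_one hmem, ← map_neighborFinset_lineGraph G h,
    card_map, card_neighborFinset_eq_degree, card_incidenceFinset_eq_degree,
    card_incidenceFinset_eq_degree] at hunion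
  omega

end LineGraph

section Subdivision

variable {V : Type*} (G : SimpleGraph V)

def subdivisionEdgeOfDart (d : G.Dart) : (subdivision G).edgeSet :=
  ⟨s(.inl d.fst, .inr ⟨d.edge, d.edge_mem⟩), Sym2.mem_mk_left _ _⟩

theorem exists_dart_fst_edge {v : V} {e : G.edgeSet} (h : v ∈ (e : Sym2 V)) :
    ∃ d : G.Dart, d.fst = v ∧ d.edge = e := by
  obtain ⟨w, hw⟩ := Sym2.mem_iff_exists.1 h
  exact ⟨⟨(v, w), by rw [← mem_edgeSet, ← hw]; exact e.2⟩, rfl, hw.symm⟩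

theorem subdivisionEdgeOfDart_bijective : (subdivisionEdgeOfDart G).Bijective := by
  constructor
  · intro d d' hdd'
    obtain ⟨hfst, hedge⟩ : d.fst = d'.fst ∧ d.edge = d'.edge := by
      simpa [subdivisionEdgeOfDart, Subtype.ext_iff] using hdd'
    rcases (dart_edge_eq_iff d d').1 hedge with h | rfl
    · exact h
    · exact absurd hfst d'.adj.ne.symm
  · rintro ⟨z, hz⟩
    induction z using Sym2.ind with
    | _ x y =>
      rcases x with v | e <;> rcases y with w | f
      · exact (show False from hz).elim
      · obtain ⟨d, rfl, hd⟩ := exists_dart_fst_edge G (show v ∈ (f : Sym2 V) from hz)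
        exact ⟨d, Subtype.ext (by simp [subdivisionEdgeOfDart, hd])⟩
      · obtain ⟨d, rfl, hd⟩ := exists_dart_fst_edge G (show w ∈ (e : Sym2 V) from hz)
        exact ⟨d, Subtype.ext (by simp [subdivisionEdgeOfDart, hd, Sym2.eq_swap])⟩
      · exact (show False from hz).elim

variable [Fintype V]

theorem subdivision_degree_inl (v : V) :
    (subdivision G).degree (.inl v) = G.degree v := by
  rw [degree_eq_card_inl_add_card_inr, (card_filter_eq_zero_iff
    (p := fun w => (subdivision G).Adj (.inl v) (.inl w))).2 fun _ _ h => h, zero_add,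
    ← card_incidenceFinset_eq_degree, incidenceFinset_eq_filter]
  refine card_nbij (↑) (fun e he => ?_) Subtype.val_injective.injOn fun e he => ?_
  · exact mem_coe.2 (mem_filter.2 ⟨mem_edgeFinset.2 e.2, (mem_filter.1 he).2⟩)
  · obtain ⟨he, hv⟩ := mem_filter.1 (mem_coe.1 he)
    exact ⟨⟨e, mem_edgeFinset.1 he⟩, mem_filter.2 ⟨mem_univ _, hv⟩, rfl⟩

theorem subdivision_degree_inr (e : G.edgeSet) :
    (subdivision G).degree (.inr e) = 2 := by
  rw [degree_eq_card_inl_add_card_inr, (card_filter_eq_zero_iff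
    (p := fun f => (subdivision G).Adj (.inr e) (.inr f))).2 fun _ _ h => h, add_zero,
    ← Sym2.card_toFinset_of_not_isDiag _ (G.not_isDiag_of_mem_edgeSet e.2)]
  congr 1
  ext
  rw [mem_filter, Sym2.mem_toFinset]
  exact and_iff_right (mem_univ _)

theorem lineGraph_subdivision_degree (d : G.Dart) :
    (lineGraph (subdivision G)).degree (subdivisionEdgeOfDart G d) = G.degree d.fst := by
  have h := lineGraph_degree_add_two (subdivision G) (u := .inl d.fst)
    (v := .inr ⟨d.edge, d.edge_mem⟩) (Sym2.mem_mk_left _ _)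
  rw [subdivision_degree_inl, subdivision_degree_inr] at h
  exact Nat.add_right_cancel h

theorem sum_lineGraph_subdivision_degree {M : Type*} [AddCommMonoid M] (F : ℕ → M) :
    ∑ x, F ((lineGraph (subdivision G)).degree x) = ∑ v, G.degree v • F (G.degree v) := by
  rw [← (subdivisionEdgeOfDart_bijective G).sum_comp]
  simp only [lineGraph_subdivision_degree]
  exact sum_dart_fst G fun v => F (G.degree v)

end Subdivision

section CycleStar

variable {k l : ℕ}

theorem cycleStar_adj_inl_iff (hk : 3 ≤ k) {i j : Fin k} :
    (cycleStar k l).Adj (.inl i) (.inl j) ↔ (cycleGraph k).Adj i j := by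
  obtain ⟨m, rfl⟩ := Nat.exists_eq_add_of_le' hk
  have hsucc : ∀ a b : Fin (m + 3), (a.val + 1) % (m + 3) = b.val ↔ b - a = 1 := by
    intro a b
    rw [sub_eq_iff_eq_add', Fin.ext_iff, Fin.val_add, Fin.val_one]
    exact eq_comm
  change i ≠ j ∧ _ ↔ _
  rw [hsucc, hsucc, cycleGraph_adj, or_comm (a := j - i = 1), and_iff_right_iff_imp]
  rintro (h | h) rfl <;> simp at h

theorem cycleStar_degree_inl (hk : 3 ≤ k) (i : Fin k) :
    (cycleStar k l).degree (.inl i) = 2 + if i.val = 0 then l else 0 := by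
  rw [degree_eq_card_inl_add_card_inr]
  congr 1
  · simp_rw [cycleStar_adj_inl_iff hk]
    obtain ⟨m, rfl⟩ := Nat.exists_eq_add_of_le' hk
    rw [← cycleGraph_degree_three_le (v := i), ← card_neighborFinset_eq_degree,
      neighborFinset_eq_filter]
  · split_ifs with h <;> simp [cycleStar, h]

theorem cycleStar_degree_inr (hk : 3 ≤ k) (a : Fin l) : (cycleStar k l).degree (.inr a) = 1 := by
  rw [degree_eq_card_inl_add_card_inr, card_eq_one.2 ⟨⟨0, by omega⟩, ?_⟩, add_eq_left,
    card_eq_zero]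
  · exact filter_false_of_mem fun _ _ h => h
  · ext j
    simp [cycleStar, Fin.ext_iff]

theorem sum_cycleStar_degree_smul {M : Type*} [AddCommMonoid M] (hk : 3 ≤ k) (F : ℕ → M) :
    ∑ v, (cycleStar k l).degree v • F ((cycleStar k l).degree v) =
      (l + 2) • F (l + 2) + (2 * (k - 1)) • F 2 + l • F 1 := by
  obtain ⟨m, rfl⟩ := Nat.exists_eq_add_of_le' hk
  simp only [Fintype.sum_sum_type, cycleStar_degree_inl hk, Fin.val_eq_zero_iff,
    Fin.sum_univ_succ, ↓reduceIte, Fin.succ_ne_zero, add_zero, sum_const, card_univ,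
    Fintype.card_fin, smul_smul, cycleStar_degree_inr hk, one_smul, Nat.add_one_sub_one]
  rw [add_comm 2 l, mul_comm (m + 2)]

end CycleStar

end Zagreb

open Zagreb in
theorem stmt8 (n k : ℕ) (hk : 3 ≤ k) (hn : k + 1 ≤ n) :
    (M1bar (lineGraph (subdivision (cycleStar k (n - k)))) : ℤ) =
      (n : ℤ) ^ 3 + (3 - k) * n ^ 2 - (k ^ 2 - 12 * k + 18) * n
        + k ^ 3 - 7 * k ^ 2 + 6 * k := by
  set G := cycleStar k (n - k)
  have hdegree_sum (F : ℕ → ℤ) :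
      ∑ x, F ((lineGraph (subdivision G)).degree x) =
        (n - k + 2 : ℕ) • F (n - k + 2) + (2 * (k - 1)) • F 2 + (n - k) • F 1 := by
    rw [sum_lineGraph_subdivision_degree, sum_cycleStar_degree_smul hk]
  have hcard : (Fintype.card (subdivision G).edgeSet : ℤ) =
      ∑ _x : (subdivision G).edgeSet, (1 : ℤ) := by simp
  rw [M1bar_eq_card_sub_one_mul_sum_degree, hcard, hdegree_sum fun _ => 1,
    hdegree_sum fun d => (d : ℤ), hdegree_sum fun d => (d : ℤ) ^ 2]
  simp only [nsmul_eq_mul]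
  push_cast [Nat.cast_sub (by omega : k ≤ n), Nat.cast_sub (by omega : 1 ≤ k)]
  ring
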